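/- Let X be an alphabet with n ≥ 2 letters, let g: X* → X* be a growing morphism, and let w ∈ X*. Then F₃({g^i(w) : i ≥ 0}) = F₃({g^i(w) : i = 0, 1, …, 2n²+2n−3}). -/

import Mathlib

open Filter Set

variable {X : Type*}

/-- Apply the morphism with letter images `g` to a word. -/
def applyM (g : X → List X) (w : List X) : List X := w.flatMap g

/-- `iterM g k w` is `g^k(w)`. -/
def iterM (g : X → List X) (k : ℕ) (w : List X) : List X := (applyM g)^[k] w

/-- The letter map of the composition `g ∘ h` (first `h`, then `g`). -/
def compM (g h : X → List X) : X → List X := fun a => applyM g (h a)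

/-- The letter map of the power `g^k`. -/
def powM (g : X → List X) (k : ℕ) : X → List X := fun a => iterM g k [a]

/-- A morphism is primitive if some power maps every letter to a word containing every letter. -/
def Primitive (g : X → List X) : Prop := ∃ k : ℕ, 0 < k ∧ ∀ a b : X, a ∈ iterM g k [b]

/-- `Mg g` is the maximal length of the image of a letter. -/
def Mg [Fintype X] (g : X → List X) : ℕ := Finset.univ.sup fun x => (g x).length

/-- A morphism is growing if the lengths of iterated images of every letter tend to infinity. -/
def Growing (g : X → List X) : Prop :=
  ∀ x : X, Tendsto (fun i => (iterM g i [x]).length) atTop atTop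

/-- `w` is a (finite) prefix of the infinite word `s`. -/
def IsPrefI (w : List X) (s : ℕ → X) : Prop := ∀ i (h : i < w.length), w[i]'h = s i

/-- `v` is a factor of the infinite word `s`. -/
def IsFactorI (v : List X) (s : ℕ → X) : Prop :=
  ∃ j : ℕ, ∀ i (h : i < v.length), v[i]'h = s (j + i)

/-- `g^ω(x)` exists. -/
def OmegaExists (g : X → List X) (x : X) : Prop :=
  [x] <+: g x ∧ Tendsto (fun i => (iterM g i [x]).length) atTop atTop

/-- `s = g^ω(x)`. -/
def IsOmega (g : X → List X) (x : X) (s : ℕ → X) : Prop :=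
  OmegaExists g x ∧ ∀ i : ℕ, IsPrefI (iterM g i [x]) s

/-- `s = u^ω` for the nonempty word `u`. -/
def IsPeriodicWord (s : ℕ → X) (u : List X) : Prop :=
  u ≠ [] ∧ ∀ (i : ℕ) (h : i % u.length < u.length), s i = u[i % u.length]'h

/-- A morphism is looping. -/
def Looping (g : X → List X) : Prop :=
  ∃ k : ℕ, 0 < k ∧ ∃ x : X, ∃ u : List X, ∃ s : ℕ → X,
    IsOmega (powM g k) x s ∧ IsPeriodicWord s u

/-- A morphism is loop-free if it is not looping. -/
def LoopFree (g : X → List X) : Prop := ¬ Looping g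

/-- `p` is a period of `u`. -/
def HasPeriod (u : List X) (p : ℕ) : Prop :=
  0 < p ∧ ∀ i : ℕ, i + p < u.length → u[i + p]? = u[i]?

/-- The smallest period of `u`. -/
noncomputable def PER (u : List X) : ℕ := sInf {p | HasPeriod u p}

/-- A primitive word: nonempty and not a proper power of a shorter word. -/
def PrimitiveWord (u : List X) : Prop :=
  u ≠ [] ∧ ¬∃ (v : List X) (j : ℕ), 2 ≤ j ∧ v.length < u.length ∧
    u = (List.replicate j v).flatten

/-- `COMP g h` : the set of words whose images under `g` and `h` are prefix-comparable. -/
def COMP (g h : X → List X) : Set (List X) :=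
  {w | ∃ u₁ u₂ : List X, applyM g w ++ u₁ = applyM h w ++ u₂}

/-- `BAL g h`. -/
noncomputable def BAL (g h : X → List X) : ℕ∞ :=
  ⨆ (x : X) (k : ℕ),
    ((((applyM g (iterM g k [x])).length : ℤ) -
      ((applyM h (iterM g k [x])).length : ℤ)).natAbs : ℕ∞)

/-- The set of factors of length `q` of the word `w`. -/
def Fq (q : ℕ) (w : List X) : Set (List X) := {v | v.length = q ∧ v <:+: w}

/-- The set of factors of length `q` of words of `L`. -/
def FqL (q : ℕ) (L : Set (List X)) : Set (List X) := ⋃ w ∈ L, Fq q w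

/-- `A n = ⌊9 n³ √(n log n)⌋`. -/
noncomputable def Abound (n : ℕ) : ℕ := ⌊9 * (n : ℝ)^3 * Real.sqrt (n * Real.log n)⌋₊
/-! For `i ≥ n = card X` we have `g^i(w) = h(g^(i-n)(w))` with `h = g^n`, and growth forces
`|h(a)| ≥ 2` for every letter `a`. Hence a factor of length 3 of `g^i(w)` lies in `h(u)` for a
factor `u` of length 1 or 2 of `g^(i-n)(w)`. The factors of length 1 and 2 of `g^(m+1)(w)` are the
successors of those of `g^m(w)` in a fixed graph on these `n + n²` words, so each of them that ever
occurs already occurs at some index `m < n + n²`; the factor of length 3 then occurs at index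
`n + m ≤ n² + 2n - 1 ≤ 2n² + 2n - 3`. -/

lemma exists_lt_le_card_map_eq {Y : Type*} [Fintype Y] (f : ℕ → Y) :
    ∃ s t, s < t ∧ t ≤ Fintype.card Y ∧ f s = f t := by
  obtain ⟨s, t, hst, heq⟩ := Fintype.exists_ne_map_eq_of_card_lt
    (fun r : Fin (Fintype.card Y + 1) => f r) (by simp)
  rcases (Fin.val_ne_of_ne hst).lt_or_gt with h | h
  · exact ⟨s, t, h, Nat.lt_succ_iff.1 t.2, heq⟩
  · exact ⟨t, s, h, Nat.lt_succ_iff.1 s.2, heq.symm⟩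

namespace SetRel

variable {Y : Type*} (R : SetRel Y Y) {S : Set Y} {y : Y}

lemma exists_mem_image_iterate_singleton {r : ℕ} (h : y ∈ R.image^[r] S) :
    ∃ x ∈ S, y ∈ R.image^[r] {x} := by
  induction r generalizing y with
  | zero => exact ⟨y, h, rfl⟩
  | succ r ih =>
    rw [Function.iterate_succ_apply'] at h
    obtain ⟨z, hz, hzy⟩ := h
    obtain ⟨x, hx, hxz⟩ := ih hz
    exact ⟨x, hx, by rw [Function.iterate_succ_apply']; exact ⟨z, hxz, hzy⟩⟩

/-- A path of length at least `card Y` repeats a vertex and can be shortened. -/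
lemma exists_lt_card_mem_image_iterate [Fintype Y] {m : ℕ} (h : y ∈ R.image^[m] S) :
    ∃ m' < Fintype.card Y, y ∈ R.image^[m'] S := by
  induction m using Nat.strong_induction_on with
  | _ m ih =>
  by_cases hm : m < Fintype.card Y
  · exact ⟨m, hm, h⟩
  have hchain : ∀ r, ∃ x, r ≤ m → x ∈ R.image^[m - r] S ∧ y ∈ R.image^[r] {x} := by
    intro r
    by_cases hr : r ≤ m
    · rw [← Nat.add_sub_of_le hr, Function.iterate_add_apply] at h
      obtain ⟨x, hx, hyx⟩ := R.exists_mem_image_iterate_singleton h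
      exact ⟨x, fun _ => ⟨hx, hyx⟩⟩
    · exact ⟨y, fun h => absurd h hr⟩
  choose x hx using hchain
  obtain ⟨s, t, hst, ht, hxst⟩ := exists_lt_le_card_map_eq x
  have hxs : {x s} ⊆ R.image^[m - t] S := by
    rw [Set.singleton_subset_iff, hxst]
    exact (hx t (by omega)).1
  have hy : y ∈ R.image^[s + (m - t)] S := by
    rw [Function.iterate_add_apply]
    exact (image_mono.iterate s) hxs (hx s (by omega)).2
  exact ih _ (by omega) hy

end SetRel

namespace List

variable {α : Type*}

lemma infix_append_cases {v A B : List α} (h : v <:+: A ++ B) :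
    v <:+: A ∨ v <:+: B ∨ ∃ v₁ v₂, v = v₁ ++ v₂ ∧ v₁ ≠ [] ∧ v₁ <:+ A ∧ v₂ <+: B := by
  obtain ⟨t₁, t₂, h⟩ := h
  rw [List.append_assoc, List.append_eq_append_iff] at h
  obtain ⟨a, rfl, h⟩ | ⟨c, rfl, rfl⟩ := h
  · rw [List.append_eq_append_iff] at h
    obtain ⟨a', rfl, rfl⟩ | ⟨c', rfl, rfl⟩ := h
    · exact Or.inl ⟨t₁, a', by simp⟩
    · rcases eq_or_ne a [] with rfl | ha
      · exact Or.inr (Or.inl ⟨[], t₂, by simp⟩)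
      · exact Or.inr (Or.inr ⟨a, c', rfl, ha, ⟨t₁, rfl⟩, ⟨t₂, rfl⟩⟩)
  · exact Or.inr (Or.inl ⟨c, t₂, by simp⟩)

end List

section Morphism

variable {g : X → List X}

@[simp] lemma applyM_nil (g : X → List X) : applyM g [] = [] := rfl

@[simp] lemma applyM_cons (g : X → List X) (a : X) (u : List X) :
    applyM g (a :: u) = g a ++ applyM g u := List.flatMap_cons

lemma List.IsInfix.applyM {u v : List X} (h : u <:+: v) (g : X → List X) :
    _root_.applyM g u <:+: _root_.applyM g v := by
  obtain ⟨s, t, rfl⟩ := h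
  exact ⟨s.flatMap g, t.flatMap g, by simp [_root_.applyM]⟩

@[simp] lemma iterM_zero (g : X → List X) (u : List X) : iterM g 0 u = u := rfl

lemma iterM_succ' (g : X → List X) (k : ℕ) (u : List X) :
    iterM g (k + 1) u = applyM g (iterM g k u) := Function.iterate_succ_apply' _ _ _

lemma iterM_add (g : X → List X) (m k : ℕ) (u : List X) :
    iterM g (m + k) u = iterM g m (iterM g k u) := Function.iterate_add_apply _ _ _ _

lemma iterM_eq_applyM_powM (g : X → List X) (k : ℕ) (u : List X) :
    iterM g k u = applyM (powM g k) u := by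
  induction k with
  | zero => exact (List.flatMap_singleton' u).symm
  | succ k ih =>
    have hpow : powM g (k + 1) = fun a => applyM g (powM g k a) :=
      funext fun a => iterM_succ' g k [a]
    rw [iterM_succ', ih, hpow]
    exact List.flatMap_assoc

lemma length_le_length_applyM (hg : ∀ x, g x ≠ []) (u : List X) :
    u.length ≤ (applyM g u).length := by
  induction u with
  | nil => simp
  | cons a u ih =>
    have := List.length_pos_iff.2 (hg a)
    simp only [applyM_cons, List.length_cons, List.length_append]
    omega

lemma monotone_length_iterM (hg : ∀ x, g x ≠ []) (u : List X) :
    Monotone fun k => (iterM g k u).length :=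
  monotone_nat_of_le_succ fun k => by
    simpa only [iterM_succ'] using length_le_length_applyM hg _

namespace Growing

lemma ne_nil (hg : Growing g) (x : X) : g x ≠ [] := fun hx => by
  obtain ⟨N, hN⟩ := eventually_atTop.1 ((hg x).eventually_gt_atTop 0)
  have hvanish : iterM g (N + 1) [x] = [] := by
    show (applyM g)^[N] (applyM g [x]) = []
    rw [applyM, List.flatMap_singleton, hx]
    exact Function.iterate_fixed (applyM_nil g) N
  simpa [hvanish] using hN (N + 1) (by omega)

lemma iterM_ne_self (hg : Growing g) {p : ℕ} (hp : 0 < p) (x : X) : iterM g p [x] ≠ [x] :=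
  fun hx => by
  obtain ⟨N, hN⟩ := eventually_atTop.1 ((hg x).eventually_ge_atTop 2)
  have hper : Function.IsPeriodicPt (applyM g) p [x] := hx
  have := hN (p * N) (Nat.le_mul_of_pos_left N hp)
  rw [iterM, (hper.mul_const N).eq] at this
  simp at this

/-- After `card X` steps every letter has grown: otherwise the letters `g^r(a) = [c_r]`,
`r ≤ card X`, repeat, and the repeated letter is a fixed point of a power of `g`. -/
lemma two_le_length_powM_card [Fintype X] (hg : Growing g) (a : X) :
    2 ≤ (powM g (Fintype.card X) a).length := by
  by_contra! hlt
  have hsingle : ∀ r ≤ Fintype.card X, iterM g r [a] = [(iterM g r [a]).headD a] := by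
    intro r hr
    have h1 := monotone_length_iterM hg.ne_nil [a] (Nat.zero_le r)
    have h2 := monotone_length_iterM hg.ne_nil [a] hr
    obtain ⟨c, hc⟩ := List.length_eq_one_iff.1
      (le_antisymm (by simpa [powM] using h2.trans (Nat.le_of_lt_succ hlt)) (by simpa using h1))
    simp [hc]
  obtain ⟨s, t, hst, ht, hc⟩ := exists_lt_le_card_map_eq fun r => (iterM g r [a]).headD a
  have hs : iterM g s [a] = [(iterM g s [a]).headD a] := hsingle s (by omega)
  have ht : iterM g t [a] = [(iterM g s [a]).headD a] := hc ▸ hsingle t ht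
  generalize (iterM g s [a]).headD a = c at hs ht
  refine hg.iterM_ne_self (Nat.sub_pos_of_lt hst) c ?_
  rw [← hs, ← iterM_add, Nat.sub_add_cancel hst.le, ht, hs]

end Growing

def shortWord : X ⊕ X × X → List X
  | .inl a => [a]
  | .inr p => [p.1, p.2]

lemma shortWord_ne_nil (y : X ⊕ X × X) : shortWord y ≠ [] := by
  cases y <;> simp [shortWord]

lemma length_shortWord_le (y : X ⊕ X × X) : (shortWord y).length ≤ 2 := by
  cases y <;> simp [shortWord]

lemma exists_shortWord_infix_of_infix_applyM {f : X → List X} {s : ℕ}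
    (hf : ∀ x, s ≤ (f x).length) {v : List X} (hv : v ≠ []) (hvs : v.length ≤ s + 1) :
    ∀ {u : List X}, v <:+: applyM f u → ∃ y, shortWord y <:+: u ∧ v <:+: applyM f (shortWord y)
  | [], h => absurd (List.eq_nil_of_infix_nil h) hv
  | a :: u, h => by
    rw [applyM_cons] at h
    rcases List.infix_append_cases h with hva | hvu | ⟨v₁, v₂, rfl, hv₁, hsuf, hpre⟩
    · exact ⟨.inl a, ⟨[], u, rfl⟩, by simpa [shortWord] using hva⟩
    · obtain ⟨y, hy, hvy⟩ := exists_shortWord_infix_of_infix_applyM hf hv hvs hvu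
      exact ⟨y, hy.trans (List.suffix_cons a u).isInfix, hvy⟩
    · cases u with
      | nil =>
        refine ⟨.inl a, ⟨[], [], rfl⟩, ?_⟩
        simpa [shortWord, List.prefix_nil.1 hpre] using hsuf.isInfix
      | cons b u =>
        rw [applyM_cons] at hpre
        have hlen := List.length_pos_iff.2 hv₁
        have hv₂ : v₂ <+: f b := List.prefix_of_prefix_length_le hpre (List.prefix_append _ _)
          (by simp only [List.length_append] at hvs; linarith [hf b])
        refine ⟨.inr (a, b), ⟨[], u, rfl⟩, ?_⟩
        obtain ⟨t₁, h₁⟩ := hsuf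
        obtain ⟨t₂, h₂⟩ := hv₂
        exact ⟨t₁, t₂, by simp [shortWord, ← h₁, ← h₂]⟩

def shortWordRel (g : X → List X) : SetRel (X ⊕ X × X) (X ⊕ X × X) :=
  {p | shortWord p.2 <:+: applyM g (shortWord p.1)}

lemma shortWord_infix_applyM_iff (hg : ∀ x, g x ≠ []) (u : List X) (y : X ⊕ X × X) :
    shortWord y <:+: applyM g u ↔ y ∈ (shortWordRel g).image {x | shortWord x <:+: u} := by
  constructor
  · intro h
    obtain ⟨x, hx, hyx⟩ := exists_shortWord_infix_of_infix_applyM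
      (fun a => List.length_pos_iff.2 (hg a)) (shortWord_ne_nil y) (length_shortWord_le y) h
    exact ⟨x, hx, hyx⟩
  · rintro ⟨x, hx, hyx⟩
    exact hyx.trans (hx.applyM g)

lemma shortWord_infix_iterM_iff (hg : ∀ x, g x ≠ []) (w : List X) (m : ℕ) (y : X ⊕ X × X) :
    shortWord y <:+: iterM g m w ↔
      y ∈ (shortWordRel g).image^[m] {x | shortWord x <:+: w} := by
  induction m generalizing y with
  | zero => rfl
  | succ m ih =>
    rw [iterM_succ', shortWord_infix_applyM_iff hg, Function.iterate_succ_apply']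
    have hset : {x | shortWord x <:+: iterM g m w} = _ := Set.ext ih
    rw [hset]

lemma exists_lt_shortWord_infix_iterM [Fintype X] (hg : ∀ x, g x ≠ []) {w : List X}
    {m : ℕ} {y : X ⊕ X × X} (h : shortWord y <:+: iterM g m w) :
    ∃ m' < Fintype.card X + Fintype.card X * Fintype.card X, shortWord y <:+: iterM g m' w := by
  rw [shortWord_infix_iterM_iff hg] at h
  obtain ⟨m', hm', h'⟩ := (shortWordRel g).exists_lt_card_mem_image_iterate h
  rw [Fintype.card_sum, Fintype.card_prod] at hm'
  exact ⟨m', hm', (shortWord_infix_iterM_iff hg w m' y).2 h'⟩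

end Morphism

/-- For a growing morphism `g` on an alphabet with `n ≥ 2` letters
and any word `w`, `F₃({g^i(w) : i ≥ 0}) = F₃({g^i(w) : 0 ≤ i ≤ 2n²+2n-3})`. -/
theorem factors_three_iterates_eq {X : Type*} [Fintype X]
    (n : ℕ) (hn : n = Fintype.card X) (hn2 : 2 ≤ n)
    (g : X → List X) (hg : Growing g) (w : List X) :
    {v | ∃ i : ℕ, v ∈ Fq 3 (iterM g i w)} =
      {v | ∃ i : ℕ, i ≤ 2 * n ^ 2 + 2 * n - 3 ∧ v ∈ Fq 3 (iterM g i w)} := by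
  ext v
  refine ⟨fun ⟨i, hlen, hv⟩ => ?_, fun ⟨i, _, hv⟩ => ⟨i, hv⟩⟩
  obtain hi | hi := le_or_gt i (2 * n ^ 2 + 2 * n - 3)
  · exact ⟨i, hi, hlen, hv⟩
  have hsq : 2 * n ≤ n ^ 2 := by nlinarith
  have hsplit : iterM g i w = applyM (powM g n) (iterM g (i - n) w) := by
    rw [← iterM_eq_applyM_powM, ← iterM_add]
    congr 1
    omega
  rw [hsplit] at hv
  obtain ⟨y, hy, hvy⟩ := exists_shortWord_infix_of_infix_applyM
    (fun a => hn ▸ hg.two_le_length_powM_card a) (by rintro rfl; simp at hlen) hlen.le hv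
  obtain ⟨m, hm, hym⟩ := exists_lt_shortWord_infix_iterM hg.ne_nil hy
  refine ⟨n + m, by rw [← hn, ← sq] at hm; omega, hlen, hvy.trans ?_⟩
  rw [iterM_add, iterM_eq_applyM_powM g n]
  exact hym.applyM _
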